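/- arXiv:2312.01811 — 3 statements merged into one kernel-verified Lean document; each statement's English description precedes it below -/
import Mathlib

section
/- Let N be a natural number, let S i be a nonempty type for each i : Fin N, let f i : S i → ℝ for each i, and let g i j : S i → S j → ℝ for all i j : Fin N with the symmetry property g i j a b = g j i b a for all i ≠ j, a : S i, b : S j. Define the costs C i u = f i (u i) + ∑_{j ≠ i} g i j (u i) (u j) and the potential P u = ∑_i f i (u i) + ∑_{i < j} g i j (u i) (u j), where the second sum ranges over pairs (i, j) with i < j. Then P is an exact potential for the game (C i): for every player i, every joint strategy u, and every s : S i, C i u - C i (Function.update u i s) = P u - P (Function.update u i s). -/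
open Finset

/-- Cost of player `i`: own term plus pairwise coupling terms with all other players. -/
def pairCost (N : ℕ) (S : Fin N → Type*)
    (f : ∀ i, S i → ℝ) (g : ∀ i j, S i → S j → ℝ)
    (i : Fin N) (u : ∀ i, S i) : ℝ :=
  f i (u i) + ∑ j ∈ Finset.univ.filter (fun j => j ≠ i), g i j (u i) (u j)

/-- Potential: sum of all own terms plus coupling terms over unordered pairs `i < j`. -/
def pairPotential (N : ℕ) (S : Fin N → Type*)
    (f : ∀ i, S i → ℝ) (g : ∀ i j, S i → S j → ℝ)
    (u : ∀ i, S i) : ℝ :=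
  (∑ i : Fin N, f i (u i)) +
    ∑ i : Fin N, ∑ j ∈ Finset.univ.filter (fun j => i < j), g i j (u i) (u j)

/-- With own costs and symmetric pairwise coupling costs, the sum of own terms
plus coupling terms over unordered pairs is an exact potential for the game. -/
theorem pairPotential_isExactPotential
    (N : ℕ) (S : Fin N → Type*) [∀ i, Nonempty (S i)]
    (f : ∀ i, S i → ℝ) (g : ∀ i j, S i → S j → ℝ)
    (hsym : ∀ (i j : Fin N), i ≠ j → ∀ (a : S i) (b : S j), g i j a b = g j i b a) :
    ∀ (i : Fin N) (u : ∀ i, S i) (s : S i),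
      pairCost N S f g i u - pairCost N S f g i (Function.update u i s) =
        pairPotential N S f g u - pairPotential N S f g (Function.update u i s) := by

  intro i u s
  set v := Function.update u i s with hv
  have hvk : ∀ k, k ≠ i → v k = u k := fun k hk => Function.update_of_ne hk _ _
  have main : ∀ w : ∀ k, S k,
      pairPotential N S f g w - pairCost N S f g i w =
        (∑ k ∈ univ.erase i, f k (w k)) +
        ∑ a ∈ univ.erase i, ∑ b ∈ univ.filter (fun b => a < b ∧ b ≠ i),
          g a b (w a) (w b) := by
    intro w
    unfold pairPotential pairCost
    -- split own-term sum
    rw [← Finset.add_sum_erase univ (fun k => f k (w k)) (mem_univ i)]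
    -- split the double sum over a = i vs a ≠ i
    rw [← Finset.add_sum_erase univ
      (fun a => ∑ b ∈ univ.filter (fun b => a < b), g a b (w a) (w b)) (mem_univ i)]
    -- split inner sums over b ≠ i vs b = i
    have hsplit : ∀ a : Fin N,
        ∑ b ∈ univ.filter (fun b => a < b), g a b (w a) (w b) =
          (∑ b ∈ univ.filter (fun b => a < b ∧ b ≠ i), g a b (w a) (w b)) +
            if a < i then g a i (w a) (w i) else 0 := by
      intro a
      rw [← Finset.sum_filter_add_sum_filter_not (univ.filter (fun b => a < b))
        (fun b => b ≠ i), Finset.filter_filter, Finset.filter_filter]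
      congr 1
      have : univ.filter (fun b => a < b ∧ ¬ b ≠ i) =
            if a < i then {i} else ∅ := by
          split_ifs with h
          · ext b; simp only [mem_filter, mem_univ, true_and, not_not,
              mem_singleton]
            constructor
            · rintro ⟨_, rfl⟩; rfl
            · rintro rfl; exact ⟨h, rfl⟩
          · ext b; simp only [mem_filter, mem_univ, true_and, not_not,
              notMem_empty, iff_false]
            rintro ⟨hab, rfl⟩; exact h hab
      rw [this]
      split_ifs with h <;> simp
    have hinner : ∀ a, a ∈ univ.erase i →
        ∑ b ∈ univ.filter (fun b => a < b), g a b (w a) (w b) =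
          (∑ b ∈ univ.filter (fun b => a < b ∧ b ≠ i), g a b (w a) (w b)) +
            if a < i then g a i (w a) (w i) else 0 := fun a _ => hsplit a
    rw [Finset.sum_congr rfl hinner, Finset.sum_add_distrib]
    -- the if-sum over erase i equals sum over a < i
    have hif : ∑ a ∈ univ.erase i, (if a < i then g a i (w a) (w i) else 0) =
        ∑ a ∈ univ.filter (fun a => a < i), g a i (w a) (w i) := by
      rw [Finset.sum_erase _ (by simp), Finset.sum_filter]
    rw [hif]
    -- the a = i inner sum: b > i implies b ≠ i
    have hii : ∑ b ∈ univ.filter (fun b => i < b), g i b (w i) (w b) =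
        ∑ b ∈ univ.filter (fun b => b ≠ i ∧ i < b), g i b (w i) (w b) := by
      apply Finset.sum_congr _ fun _ _ => rfl
      ext b; simp only [mem_filter, mem_univ, true_and]
      constructor
      · exact fun h => ⟨(ne_of_lt h).symm, h⟩
      · exact fun ⟨_, h⟩ => h
    -- split the cost coupling sum
    have hcost : ∑ j ∈ univ.filter (fun j => j ≠ i), g i j (w i) (w j) =
        (∑ j ∈ univ.filter (fun j => j ≠ i ∧ i < j), g i j (w i) (w j)) +
          ∑ j ∈ univ.filter (fun j => j < i), g i j (w i) (w j) := by
      rw [← Finset.sum_filter_add_sum_filter_not (univ.filter (fun j => j ≠ i))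
        (fun j => i < j), Finset.filter_filter, Finset.filter_filter]
      congr 1
      apply Finset.sum_congr _ fun _ _ => rfl
      ext j; simp only [mem_filter, mem_univ, true_and]
      constructor
      · exact fun ⟨h1, h2⟩ => lt_of_le_of_ne (le_of_not_gt h2) h1
      · exact fun h => ⟨ne_of_lt h, not_lt_of_gt h⟩
    have hsymsum : ∑ a ∈ univ.filter (fun a => a < i), g a i (w a) (w i) =
        ∑ a ∈ univ.filter (fun a => a < i), g i a (w i) (w a) := by
      apply Finset.sum_congr rfl
      intro a ha
      simp only [mem_filter] at ha
      exact (hsym i a (ne_of_lt ha.2).symm _ _).symm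
    rw [hcost, hii, hsymsum]
    ring
  have e : (∑ k ∈ univ.erase i, f k (u k)) +
      (∑ a ∈ univ.erase i, ∑ b ∈ univ.filter (fun b => a < b ∧ b ≠ i),
        g a b (u a) (u b)) =
      (∑ k ∈ univ.erase i, f k (v k)) +
      ∑ a ∈ univ.erase i, ∑ b ∈ univ.filter (fun b => a < b ∧ b ≠ i),
        g a b (v a) (v b) := by
    congr 1
    · exact Finset.sum_congr rfl fun k hk => by
        rw [hvk k (mem_erase.1 hk).1]
    · exact Finset.sum_congr rfl fun a ha => Finset.sum_congr rfl fun b hb => by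
        rw [hvk a (mem_erase.1 ha).1, hvk b (mem_filter.1 hb).2.2]
  linarith [main u, main v, e]
end

section
/- Let N be a natural number, let S i be a nonempty type for each i : Fin N, let f i : S i → ℝ for each i, and let g i j : S i → S j → ℝ for all i j : Fin N with the symmetry property g i j a b = g j i b a for all i ≠ j, a : S i, b : S j. Define the costs C i u = f i (u i) + ∑_{j ≠ i} g i j (u i) (u j) and the potential P u = ∑_i f i (u i) + ∑_{i < j} g i j (u i) (u j). If u* : ∀ i, S i is a global minimizer of P, then u* is a Nash equilibrium of the game (C i): for every player i and every s : S i, C i u* ≤ C i (Function.update u* i s). -/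
open Finset

/-- Remainder of the potential not involving player `i`. -/
def pairRest (N : ℕ) (S : Fin N → Type*)
    (f : ∀ i, S i → ℝ) (g : ∀ i j, S i → S j → ℝ)
    (i : Fin N) (u : ∀ i, S i) : ℝ :=
  (∑ j ∈ Finset.univ.erase i, f j (u j)) +
    ∑ k ∈ Finset.univ.erase i, ∑ l ∈ (Finset.univ.erase i).filter (fun l => k < l),
      g k l (u k) (u l)

lemma pairPotential_decomp (N : ℕ) (S : Fin N → Type*)
    (f : ∀ i, S i → ℝ) (g : ∀ i j, S i → S j → ℝ)
    (hsym : ∀ (i j : Fin N), i ≠ j → ∀ (a : S i) (b : S j), g i j a b = g j i b a)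
    (i : Fin N) (u : ∀ i, S i) :
    pairPotential N S f g u = pairCost N S f g i u + pairRest N S f g i u := by
  unfold pairPotential pairCost pairRest
  -- split the own-cost sum
  have hf : (∑ j : Fin N, f j (u j)) = f i (u i) + ∑ j ∈ Finset.univ.erase i, f j (u j) :=
    (Finset.add_sum_erase _ _ (mem_univ i)).symm
  -- split the coupling double sum
  have hcoup : (∑ k : Fin N, ∑ l ∈ Finset.univ.filter (fun l => k < l), g k l (u k) (u l))
      = (∑ j ∈ Finset.univ.filter (fun j => j ≠ i), g i j (u i) (u j)) +
        ∑ k ∈ Finset.univ.erase i, ∑ l ∈ (Finset.univ.erase i).filter (fun l => k < l),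
          g k l (u k) (u l) := by
    have hsplit : (∑ k : Fin N, ∑ l ∈ Finset.univ.filter (fun l => k < l), g k l (u k) (u l))
        = (∑ l ∈ Finset.univ.filter (fun l => i < l), g i l (u i) (u l)) +
          ∑ k ∈ Finset.univ.erase i, ∑ l ∈ Finset.univ.filter (fun l => k < l),
            g k l (u k) (u l) :=
      (Finset.add_sum_erase _ _ (mem_univ i)).symm
    -- for each k ≠ i, split inner sum on whether l = i
    have hinner : ∀ k ∈ Finset.univ.erase i,
        (∑ l ∈ Finset.univ.filter (fun l => k < l), g k l (u k) (u l))
        = (if k < i then g k i (u k) (u i) else 0) +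
          ∑ l ∈ (Finset.univ.erase i).filter (fun l => k < l), g k l (u k) (u l) := by
      intro k hk
      by_cases hki : k < i
      · have hmem : Finset.univ.filter (fun l => k < l)
            = insert i ((Finset.univ.erase i).filter (fun l => k < l)) := by
          ext l
          simp only [Finset.mem_filter, Finset.mem_insert, Finset.mem_erase, Finset.mem_univ,
            true_and]
          constructor
          · intro h
            by_cases hl : l = i
            · exact Or.inl hl
            · exact Or.inr ⟨⟨hl, trivial⟩, h⟩
          · rintro (rfl | ⟨_, h⟩)
            · exact hki
            · exact h
        rw [hmem, Finset.sum_insert (by simp), if_pos hki]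
      · have hmem : Finset.univ.filter (fun l => k < l)
            = (Finset.univ.erase i).filter (fun l => k < l) := by
          ext l
          simp only [Finset.mem_filter, Finset.mem_erase, Finset.mem_univ, true_and]
          constructor
          · intro h
            refine ⟨⟨?_, trivial⟩, h⟩
            rintro rfl
            exact hki h
          · exact fun h => h.2
        rw [hmem, if_neg hki, zero_add]
    rw [hsplit, Finset.sum_congr rfl hinner, Finset.sum_add_distrib]
    -- now handle the `if` sum
    have hif : (∑ k ∈ Finset.univ.erase i, if k < i then g k i (u k) (u i) else 0)
        = ∑ k ∈ Finset.univ.filter (fun k => k < i), g i k (u i) (u k) := by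
      rw [← Finset.sum_filter]
      have : (Finset.univ.erase i).filter (fun k => k < i)
          = Finset.univ.filter (fun k => k < i) := by
        ext k
        simp only [Finset.mem_filter, Finset.mem_erase, Finset.mem_univ, true_and]
        exact ⟨fun h => h.2, fun h => ⟨⟨ne_of_lt h, trivial⟩, h⟩⟩
      rw [this]
      exact Finset.sum_congr rfl fun k hk => by
        rw [hsym k i (ne_of_lt (Finset.mem_filter.mp hk).2) (u k) (u i)]
    rw [hif]
    -- combine the two halves of the neighbor sum
    have hpart : (∑ j ∈ Finset.univ.filter (fun j => j ≠ i), g i j (u i) (u j))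
        = (∑ l ∈ Finset.univ.filter (fun l => i < l), g i l (u i) (u l)) +
          ∑ k ∈ Finset.univ.filter (fun k => k < i), g i k (u i) (u k) := by
      rw [← Finset.sum_filter_add_sum_filter_not (Finset.univ.filter (fun j => j ≠ i))
        (fun j => i < j)]
      congr 1
      · congr 1
        ext j
        simp only [Finset.mem_filter, Finset.mem_univ, true_and]
        exact ⟨fun h => h.2, fun h => ⟨ne_of_gt h, h⟩⟩
      · congr 1
        ext j
        simp only [Finset.mem_filter, Finset.mem_univ, true_and]
        constructor
        · rintro ⟨hne, hnlt⟩
          exact lt_of_le_of_ne (not_lt.mp hnlt) hne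
        · intro h
          exact ⟨ne_of_lt h, not_lt.mpr (le_of_lt h)⟩
    rw [hpart]
    ring
  rw [hf, hcoup]
  ring

/-- With own costs and symmetric pairwise coupling costs, any global minimizer of
the potential is a Nash equilibrium of the game. -/
theorem pairPotential_global_min_is_nash
    (N : ℕ) (S : Fin N → Type*) [∀ i, Nonempty (S i)]
    (f : ∀ i, S i → ℝ) (g : ∀ i j, S i → S j → ℝ)
    (hsym : ∀ (i j : Fin N), i ≠ j → ∀ (a : S i) (b : S j), g i j a b = g j i b a)
    (ustar : ∀ i, S i)
    (hmin : ∀ u : ∀ i, S i, pairPotential N S f g ustar ≤ pairPotential N S f g u) :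
    ∀ (i : Fin N) (s : S i),
      pairCost N S f g i ustar ≤ pairCost N S f g i (Function.update ustar i s) := by
  intro i s
  have hrest : pairRest N S f g i (Function.update ustar i s) = pairRest N S f g i ustar := by
    unfold pairRest
    congr 1
    · exact Finset.sum_congr rfl fun j hj => by
        rw [Function.update_of_ne (Finset.mem_erase.mp hj).1]
    · refine Finset.sum_congr rfl fun k hk => Finset.sum_congr rfl fun l hl => ?_
      rw [Function.update_of_ne (Finset.mem_erase.mp hk).1,
        Function.update_of_ne (Finset.mem_erase.mp (Finset.mem_filter.mp hl).1).1]
  have h1 := pairPotential_decomp N S f g hsym i ustar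
  have h2 := pairPotential_decomp N S f g hsym i (Function.update ustar i s)
  have h3 := hmin (Function.update ustar i s)
  rw [h1, h2, hrest] at h3
  linarith
end

section
/- Let N, n, m be natural numbers, let S i be a nonempty type for each i : Fin N, let c i : S i → EuclideanSpace ℝ (Fin n) and w i : EuclideanSpace ℝ (Fin n) for each i, and let d i j : S i → S j → EuclideanSpace ℝ (Fin m) and w' i j : EuclideanSpace ℝ (Fin m) for all i j : Fin N satisfy, for all i ≠ j, a : S i, b : S j, the symmetries d i j a b = d j i b a and w' i j = w' j i. Define the own energies E i (a) = (1/2) * (⟪w i, c i a⟫_ℝ)^2, the pairwise energies G i j a b = (1/2) * (⟪w' i j, d i j a b⟫_ℝ)^2, the costs C i u = E i (u i) + ∑_{j ≠ i} G i j (u i) (u j), and the total energy E_tot u = ∑_i E i (u i) + ∑_{i < j} G i j (u i) (u j). Then E_tot is an exact potential for the game (C i), and every global minimizer u* of E_tot is a Nash equilibrium: for every player i and every s : S i, C i u* ≤ C i (Function.update u* i s). -/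
open Finset
open scoped RealInnerProductSpace

/-- Agent-specific energy: half the squared weighted combination of features. -/
noncomputable def ownEnergy (N n : ℕ) (S : Fin N → Type*)
    (c : ∀ i, S i → EuclideanSpace ℝ (Fin n))
    (w : Fin N → EuclideanSpace ℝ (Fin n)) (i : Fin N) (a : S i) : ℝ :=
  (1 / 2) * (⟪w i, c i a⟫)^2

/-- Pairwise interaction energy: half the squared weighted distance measure. -/
noncomputable def pairEnergy (N m : ℕ) (S : Fin N → Type*)
    (d : ∀ i j, S i → S j → EuclideanSpace ℝ (Fin m))
    (w' : Fin N → Fin N → EuclideanSpace ℝ (Fin m))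
    (i j : Fin N) (a : S i) (b : S j) : ℝ :=
  (1 / 2) * (⟪w' i j, d i j a b⟫)^2

/-- Cost of player `i`: own energy plus pairwise energies with all other players. -/
noncomputable def energyCost (N n m : ℕ) (S : Fin N → Type*)
    (c : ∀ i, S i → EuclideanSpace ℝ (Fin n))
    (w : Fin N → EuclideanSpace ℝ (Fin n))
    (d : ∀ i j, S i → S j → EuclideanSpace ℝ (Fin m))
    (w' : Fin N → Fin N → EuclideanSpace ℝ (Fin m))
    (i : Fin N) (u : ∀ i, S i) : ℝ :=
  ownEnergy N n S c w i (u i) +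
    ∑ j ∈ Finset.univ.filter (fun j => j ≠ i),
      pairEnergy N m S d w' i j (u i) (u j)

/-- Total energy: sum of all own energies plus pairwise energies over unordered pairs. -/
noncomputable def totalEnergy (N n m : ℕ) (S : Fin N → Type*)
    (c : ∀ i, S i → EuclideanSpace ℝ (Fin n))
    (w : Fin N → EuclideanSpace ℝ (Fin n))
    (d : ∀ i j, S i → S j → EuclideanSpace ℝ (Fin m))
    (w' : Fin N → Fin N → EuclideanSpace ℝ (Fin m))
    (u : ∀ i, S i) : ℝ :=
  (∑ i : Fin N, ownEnergy N n S c w i (u i)) +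
    ∑ i : Fin N, ∑ j ∈ Finset.univ.filter (fun j => i < j),
      pairEnergy N m S d w' i j (u i) (u j)

/-- The energy structure of the Energy-based Potential Game Layer: the total
energy is an exact potential for the induced game, and every global minimizer
of the total energy is a Nash equilibrium. -/
theorem totalEnergy_isExactPotential_and_min_is_nash
    (N n m : ℕ) (S : Fin N → Type*) [∀ i, Nonempty (S i)]
    (c : ∀ i, S i → EuclideanSpace ℝ (Fin n))
    (w : Fin N → EuclideanSpace ℝ (Fin n))
    (d : ∀ i j, S i → S j → EuclideanSpace ℝ (Fin m))
    (w' : Fin N → Fin N → EuclideanSpace ℝ (Fin m))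
    (hdsym : ∀ (i j : Fin N), i ≠ j → ∀ (a : S i) (b : S j), d i j a b = d j i b a)
    (hwsym : ∀ (i j : Fin N), i ≠ j → w' i j = w' j i) :
    (∀ (i : Fin N) (u : ∀ i, S i) (s : S i),
      energyCost N n m S c w d w' i u -
        energyCost N n m S c w d w' i (Function.update u i s) =
      totalEnergy N n m S c w d w' u -
        totalEnergy N n m S c w d w' (Function.update u i s)) ∧
    (∀ ustar : ∀ i, S i,
      (∀ u : ∀ i, S i, totalEnergy N n m S c w d w' ustar ≤ totalEnergy N n m S c w d w' u) →
      ∀ (i : Fin N) (s : S i),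
        energyCost N n m S c w d w' i ustar ≤
          energyCost N n m S c w d w' i (Function.update ustar i s)) := by
  
  classical
  have pairSymm : ∀ (i j : Fin N), i ≠ j → ∀ (a : S i) (b : S j),
      pairEnergy N m S d w' i j a b = pairEnergy N m S d w' j i b a := by
    intro i j hij a b
    simp [pairEnergy, hdsym i j hij a b, hwsym i j hij]
  have key : ∀ (i : Fin N) (u : ∀ i, S i) (s : S i),
      energyCost N n m S c w d w' i u -
        energyCost N n m S c w d w' i (Function.update u i s) =
      totalEnergy N n m S c w d w' u -
        totalEnergy N n m S c w d w' (Function.update u i s) := by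
    intro i u s
    set u' := Function.update u i s with hu'
    have hu'i : u' i = s := Function.update_self i s u
    have hu'j : ∀ j, j ≠ i → u' j = u j := fun j hj => Function.update_of_ne hj s u
    set F : Fin N → Fin N → ℝ := fun a b =>
      pairEnergy N m S d w' a b (u a) (u b) - pairEnergy N m S d w' a b (u' a) (u' b)
      with hF
    have hF0 : ∀ a b : Fin N, a ≠ i → b ≠ i → F a b = 0 := by
      intro a b ha hb
      simp [hF, hu'j a ha, hu'j b hb]
    have hFsym : ∀ a b : Fin N, a ≠ b → F a b = F b a := by
      intro a b hab
      simp only [hF]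
      rw [pairSymm a b hab (u a) (u b), pairSymm a b hab (u' a) (u' b)]
    -- own part
    have hown : (∑ a : Fin N, ownEnergy N n S c w a (u a)) -
        (∑ a : Fin N, ownEnergy N n S c w a (u' a)) =
        ownEnergy N n S c w i (u i) - ownEnergy N n S c w i s := by
      rw [← Finset.sum_sub_distrib]
      rw [Finset.sum_eq_single i]
      · rw [hu'i]
      · intro b _ hb
        rw [hu'j b hb]; ring
      · intro h; exact absurd (Finset.mem_univ i) h
    -- pair part
    have hpair : (∑ a : Fin N, ∑ b ∈ Finset.univ.filter (fun b => a < b),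
          pairEnergy N m S d w' a b (u a) (u b)) -
        (∑ a : Fin N, ∑ b ∈ Finset.univ.filter (fun b => a < b),
          pairEnergy N m S d w' a b (u' a) (u' b)) =
        ∑ j ∈ Finset.univ.filter (fun j => j ≠ i), F i j := by
      rw [← Finset.sum_sub_distrib]
      have hinner : ∀ a : Fin N,
          (∑ b ∈ Finset.univ.filter (fun b => a < b),
            pairEnergy N m S d w' a b (u a) (u b)) -
          (∑ b ∈ Finset.univ.filter (fun b => a < b),
            pairEnergy N m S d w' a b (u' a) (u' b)) =
          ∑ b ∈ Finset.univ.filter (fun b => a < b), F a b := by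
        intro a; rw [← Finset.sum_sub_distrib]
      simp only [hinner]
      have hsplit : (∑ a : Fin N, ∑ b ∈ Finset.univ.filter (fun b => a < b), F a b) =
          (∑ b ∈ Finset.univ.filter (fun b => i < b), F i b) +
          ∑ a ∈ Finset.univ.erase i, ∑ b ∈ Finset.univ.filter (fun b => a < b), F a b := by
        rw [← Finset.add_sum_erase _ _ (Finset.mem_univ i)]
      rw [hsplit]
      have herase : (∑ a ∈ Finset.univ.erase i,
          ∑ b ∈ Finset.univ.filter (fun b => a < b), F a b) =
          ∑ a ∈ Finset.univ.filter (fun a => a < i), F i a := by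
        have h1 : ∀ a ∈ Finset.univ.erase i,
            (∑ b ∈ Finset.univ.filter (fun b => a < b), F a b) =
            if a < i then F i a else 0 := by
          intro a ha
          have hai : a ≠ i := Finset.ne_of_mem_erase ha
          by_cases h : a < i
          · rw [if_pos h, Finset.sum_eq_single i]
            · exact hFsym a i hai
            · intro b hb hbi
              exact hF0 a b hai hbi
            · intro hni
              exact absurd (Finset.mem_filter.mpr ⟨Finset.mem_univ i, h⟩) hni
          · rw [if_neg h]
            apply Finset.sum_eq_zero
            intro b hb
            have hb' : a < b := (Finset.mem_filter.mp hb).2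
            have hbi : b ≠ i := by
              intro hbe; exact h (hbe ▸ hb')
            exact hF0 a b hai hbi
        rw [Finset.sum_congr rfl h1, ← Finset.sum_filter]
        congr 1
        ext a
        simp only [Finset.mem_filter, Finset.mem_erase, Finset.mem_univ, true_and,
          and_true]
        constructor
        · rintro ⟨_, h⟩; exact h
        · intro h; exact ⟨ne_of_lt h, h⟩
      rw [herase]
      rw [← Finset.sum_union]
      · congr 1
        ext b
        simp only [Finset.mem_union, Finset.mem_filter, Finset.mem_univ, true_and]
        rw [ne_comm]
        exact lt_or_lt_iff_ne
      · rw [Finset.disjoint_filter]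
        intro x _ hx
        exact not_lt_of_gt hx
    -- combine
    have hcost : energyCost N n m S c w d w' i u -
        energyCost N n m S c w d w' i u' =
        (ownEnergy N n S c w i (u i) - ownEnergy N n S c w i s) +
        ∑ j ∈ Finset.univ.filter (fun j => j ≠ i), F i j := by
      have h1 : ownEnergy N n S c w i (u' i) = ownEnergy N n S c w i s := by rw [hu'i]
      have hs : (∑ j ∈ Finset.univ.filter (fun j => j ≠ i), F i j) =
          ∑ j ∈ Finset.univ.filter (fun j => j ≠ i),
            (pairEnergy N m S d w' i j (u i) (u j) -
             pairEnergy N m S d w' i j (u' i) (u' j)) := rfl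
      simp only [energyCost]
      rw [h1, hs, Finset.sum_sub_distrib]
      ring
    have htot : totalEnergy N n m S c w d w' u -
        totalEnergy N n m S c w d w' u' =
        (ownEnergy N n S c w i (u i) - ownEnergy N n S c w i s) +
        ∑ j ∈ Finset.univ.filter (fun j => j ≠ i), F i j := by
      simp only [totalEnergy]
      linarith [hown, hpair]
    rw [hcost, htot]
  refine ⟨key, ?_⟩
  intro ustar hmin i s
  have h := key i ustar s
  have h2 := hmin (Function.update ustar i s)
  linarith
end
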